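/- arXiv:1507.08237 — 2 statements merged into one kernel-verified Lean document; each statement's English description precedes it below -/
import Mathlib

section
/- (Necessity in Theorem 3.1.) Under the lens setting below, suppose $d:\Omega\to\mathbb{R}$ is $C^1$ and the map $f(x) = P(x) + d(x)\,m_1(x)$ satisfies $\big(e(x) - \lambda_1(x)\nu_1(x) - \kappa_1\kappa_2 w\big)\cdot \partial f/\partial x_i = 0$ on $\Omega$ for $i=1,2$. Then $\partial e_2/\partial x_1 = \partial e_1/\partial x_2$ on $\Omega$, and for any $h:\Omega\to\mathbb{R}$ with $\nabla h = (e_1,e_2)$ there is a constant $C$ such that $d(x) = \dfrac{C - h(x) + e(x)\cdot(x,0) - \big(e(x)-\kappa_1\kappa_2 w\big)\cdot P(x)}{\kappa_1 - \kappa_2\, w\cdot\big(e(x) - \lambda_1(x)\nu_1(x)\big)}$ for all $x\in\Omega$. -/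
noncomputable section

/-- Euclidean inner product in `ℝ³`. -/
def dot3 (x y : Fin 3 → ℝ) : ℝ := x 0 * y 0 + x 1 * y 1 + x 2 * y 2

/-- Euclidean norm in `ℝ³`. -/
def norm3 (x : Fin 3 → ℝ) : ℝ := Real.sqrt (dot3 x x)

/-- Euclidean inner product in `ℝ²`. -/
def dot2 (x y : Fin 2 → ℝ) : ℝ := x 0 * y 0 + x 1 * y 1

/-- Euclidean norm in `ℝ²`. -/
def norm2 (x : Fin 2 → ℝ) : ℝ := Real.sqrt (dot2 x x)

/-- The embedding `x = (x₁,x₂) ↦ (x₁,x₂,0)` of the source plane into `ℝ³`. -/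
def lift2 (x : Fin 2 → ℝ) : Fin 3 → ℝ := ![x 0, x 1, 0]

/-- Cross product in `ℝ³`. -/
def cross3 (x y : Fin 3 → ℝ) : Fin 3 → ℝ :=
  ![x 1 * y 2 - x 2 * y 1, x 2 * y 0 - x 0 * y 2, x 0 * y 1 - x 1 * y 0]

/-- Partial derivative `∂f/∂xᵢ` of a scalar function on `ℝ²`. -/
def pd (i : Fin 2) (f : (Fin 2 → ℝ) → ℝ) (x : Fin 2 → ℝ) : ℝ :=
  fderiv ℝ f x (Pi.single i 1)

/-- Gradient of a scalar function on `ℝ²`. -/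
def grad2 (f : (Fin 2 → ℝ) → ℝ) (x : Fin 2 → ℝ) : Fin 2 → ℝ :=
  ![pd 0 f x, pd 1 f x]

/-- Two-dimensional curl of a plane field: `curl V = ∂V₂/∂x₁ - ∂V₁/∂x₂`. -/
def curl2 (V : (Fin 2 → ℝ) → (Fin 2 → ℝ)) (x : Fin 2 → ℝ) : ℝ :=
  pd 0 (fun y => V y 1) x - pd 1 (fun y => V y 0) x

/-- Two-dimensional cross product `a × b = a₁b₂ - a₂b₁`. -/
def cross2v (a b : Fin 2 → ℝ) : ℝ := a 0 * b 1 - a 1 * b 0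

end

open Topology Filter
noncomputable section

lemma hasFDerivAt_comp_proj {n : ℕ} {g : (Fin 2 → ℝ) → (Fin n → ℝ)} {y : Fin 2 → ℝ}
    (hg : DifferentiableAt ℝ g y) (j : Fin n) :
    HasFDerivAt (fun x => g x j)
      ((ContinuousLinearMap.proj j : ((Fin n) → ℝ) →L[ℝ] ℝ).comp (fderiv ℝ g y)) y :=
  (ContinuousLinearMap.proj j : ((Fin n) → ℝ) →L[ℝ] ℝ).hasFDerivAt.comp y hg.hasFDerivAt

lemma fderiv_comp_proj {n : ℕ} {g : (Fin 2 → ℝ) → (Fin n → ℝ)} {y : Fin 2 → ℝ}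
    (hg : DifferentiableAt ℝ g y) (j : Fin n) (v : Fin 2 → ℝ) :
    fderiv ℝ (fun x => g x j) y v = fderiv ℝ g y v j := by
  rw [(hasFDerivAt_comp_proj hg j).fderiv]; rfl

lemma diff_comp {n : ℕ} {g : (Fin 2 → ℝ) → (Fin n → ℝ)} {y : Fin 2 → ℝ}
    (hg : DifferentiableAt ℝ g y) (j : Fin n) :
    DifferentiableAt ℝ (fun x => g x j) y :=
  (hasFDerivAt_comp_proj hg j).differentiableAt

lemma lin2 (L : (Fin 2 → ℝ) →L[ℝ] ℝ) (v : Fin 2 → ℝ) :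
    L v = v 0 * L (Pi.single 0 1) + v 1 * L (Pi.single 1 1) := by
  have hv : v = v 0 • (Pi.single 0 1 : Fin 2 → ℝ) + v 1 • (Pi.single 1 1 : Fin 2 → ℝ) := by
    funext j; fin_cases j <;> simp [Pi.single_apply]
  conv_lhs => rw [hv]
  simp

lemma clm_ext2 {L M : (Fin 2 → ℝ) →L[ℝ] ℝ}
    (h0 : L (Pi.single 0 1) = M (Pi.single 0 1))
    (h1 : L (Pi.single 1 1) = M (Pi.single 1 1)) : L = M :=
  ContinuousLinearMap.ext fun v => by rw [lin2 L v, lin2 M v, h0, h1]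

lemma cs3 (a b : Fin 3 → ℝ) : (dot3 a b)^2 ≤ dot3 a a * dot3 b b := by
  simp only [dot3]
  nlinarith [sq_nonneg (a 0 * b 1 - a 1 * b 0), sq_nonneg (a 0 * b 2 - a 2 * b 0),
    sq_nonneg (a 1 * b 2 - a 2 * b 1)]

lemma dot3_self_nonneg (a : Fin 3 → ℝ) : 0 ≤ dot3 a a := by
  simp only [dot3]; nlinarith [sq_nonneg (a 0), sq_nonneg (a 1), sq_nonneg (a 2)]

lemma fderiv_dot3 {g h : (Fin 2 → ℝ) → (Fin 3 → ℝ)} {y : Fin 2 → ℝ} (v : Fin 2 → ℝ)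
    (hg : DifferentiableAt ℝ g y) (hh : DifferentiableAt ℝ h y) :
    fderiv ℝ (fun x => dot3 (g x) (h x)) y v
      = dot3 (g y) (fderiv ℝ h y v) + dot3 (fderiv ℝ g y v) (h y) := by
  have H := (((hasFDerivAt_comp_proj hg 0).mul (hasFDerivAt_comp_proj hh 0)).add
    ((hasFDerivAt_comp_proj hg 1).mul (hasFDerivAt_comp_proj hh 1))).add
    ((hasFDerivAt_comp_proj hg 2).mul (hasFDerivAt_comp_proj hh 2))
  simp only [dot3]
  rw [(show HasFDerivAt (fun x => g x 0 * h x 0 + g x 1 * h x 1 + g x 2 * h x 2) _ y from H).fderiv]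
  simp only [ContinuousLinearMap.add_apply, ContinuousLinearMap.smul_apply,
    ContinuousLinearMap.comp_apply, ContinuousLinearMap.proj_apply, smul_eq_mul]
  ring

lemma diff_dot3 {g h : (Fin 2 → ℝ) → (Fin 3 → ℝ)} {y : Fin 2 → ℝ}
    (hg : DifferentiableAt ℝ g y) (hh : DifferentiableAt ℝ h y) :
    DifferentiableAt ℝ (fun x => dot3 (g x) (h x)) y := by
  simp only [dot3]
  exact (((diff_comp hg 0).mul (diff_comp hh 0)).add
    ((diff_comp hg 1).mul (diff_comp hh 1))).add ((diff_comp hg 2).mul (diff_comp hh 2))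

lemma nuUnit (g : Fin 2 → ℝ) :
    dot3 ((Real.sqrt (1 + norm2 g ^ 2))⁻¹ • ![-(g 0), -(g 1), 1])
      ((Real.sqrt (1 + norm2 g ^ 2))⁻¹ • ![-(g 0), -(g 1), 1]) = 1 := by
  have h2 : norm2 g ^ 2 = g 0 ^ 2 + g 1 ^ 2 := by
    rw [norm2, Real.sq_sqrt (by simp only [dot2]; nlinarith [sq_nonneg (g 0), sq_nonneg (g 1)])]
    simp only [dot2]; ring
  have hpos : (0:ℝ) < 1 + norm2 g ^ 2 := by nlinarith [sq_nonneg (norm2 g)]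
  have hc : Real.sqrt (1 + norm2 g ^ 2) ^ 2 = 1 + norm2 g ^ 2 := Real.sq_sqrt hpos.le
  have hcne : Real.sqrt (1 + norm2 g ^ 2) ≠ 0 := by positivity
  simp only [dot3, Pi.smul_apply, smul_eq_mul, Matrix.cons_val_zero, Matrix.cons_val_one,
    Matrix.head_cons, Matrix.cons_val_two, Matrix.tail_cons]
  field_simp
  nlinarith [hc, h2]

lemma normA {κ1 : ℝ} (hκ1 : 1 < κ1) {ev νv : Fin 3 → ℝ} {lam : ℝ}
    (hν : dot3 νv νv = 1) (hee : dot3 ev ev = 1)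
    (hlam : lam = dot3 ev νv - κ1 * Real.sqrt (1 - (κ1 ^ 2)⁻¹ * (1 - dot3 ev νv ^ 2))) :
    dot3 (ev - lam • νv) (ev - lam • νv) = κ1 ^ 2 := by
  set t := dot3 ev νv with ht
  have hκpos : (0:ℝ) < κ1 ^ 2 := by positivity
  have hrad : 0 ≤ 1 - (κ1 ^ 2)⁻¹ * (1 - t ^ 2) := by
    rw [inv_mul_eq_div, sub_nonneg, div_le_one hκpos]
    nlinarith [sq_nonneg t]
  have hs : Real.sqrt (1 - (κ1 ^ 2)⁻¹ * (1 - t ^ 2)) ^ 2 = 1 - (κ1 ^ 2)⁻¹ * (1 - t ^ 2) :=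
    Real.sq_sqrt hrad
  have hs2 : κ1 ^ 2 * Real.sqrt (1 - (κ1 ^ 2)⁻¹ * (1 - t ^ 2)) ^ 2 = κ1 ^ 2 - 1 + t ^ 2 := by
    rw [hs]; field_simp; ring
  have expand : dot3 (ev - lam • νv) (ev - lam • νv)
      = dot3 ev ev - 2 * lam * t + lam ^ 2 * dot3 νv νv := by
    simp only [dot3, Pi.sub_apply, Pi.smul_apply, smul_eq_mul, ht]; ring
  rw [expand, hee, hν, hlam]
  nlinarith [hs2]

def Gaux (κ1 κ2 : ℝ) (d ρ : (Fin 2 → ℝ) → ℝ) (m1 P : (Fin 2 → ℝ) → (Fin 3 → ℝ))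
    (w : Fin 3 → ℝ) : (Fin 2 → ℝ) → ℝ :=
  fun x => κ1 * d x * (1 - κ2 * dot3 w (m1 x)) + ρ x - (κ1 * κ2) * dot3 w (P x)

lemma keyDeriv
    (Ω : Set (Fin 2 → ℝ)) (hΩ : IsOpen Ω)
    (κ1 κ2 : ℝ) (hκ1 : 1 < κ1)
    (u : (Fin 2 → ℝ) → ℝ) (hu : ContDiff ℝ 2 u)
    (φ : (Fin 2 → ℝ) → (Fin 2 → ℝ)) (hφ : ContDiffOn ℝ 1 φ Ω)
    (P : (Fin 2 → ℝ) → (Fin 3 → ℝ)) (hP : ∀ x, P x = ![φ x 0, φ x 1, u (φ x)])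
    (e : (Fin 2 → ℝ) → (Fin 3 → ℝ)) (he : ContDiffOn ℝ 1 e Ω)
    (heunit : ∀ x ∈ Ω, norm3 (e x) = 1)
    (ρ : (Fin 2 → ℝ) → ℝ) (hρdiff : DifferentiableOn ℝ ρ Ω)
    (hray : ∀ x ∈ Ω, P x = lift2 x + ρ x • e x)
    (ν1 : (Fin 2 → ℝ) → (Fin 3 → ℝ))
    (hν1 : ∀ x, ν1 x = (Real.sqrt (1 + norm2 (grad2 u (φ x)) ^ 2))⁻¹ •
        ![-(grad2 u (φ x) 0), -(grad2 u (φ x) 1), 1])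
    (lam1 : (Fin 2 → ℝ) → ℝ)
    (hlam1 : ∀ x, lam1 x = dot3 (e x) (ν1 x) -
        κ1 * Real.sqrt (1 - (κ1 ^ 2)⁻¹ * (1 - dot3 (e x) (ν1 x) ^ 2)))
    (m1 : (Fin 2 → ℝ) → (Fin 3 → ℝ)) (hm1 : ∀ x, m1 x = κ1⁻¹ • (e x - lam1 x • ν1 x))
    (w : Fin 3 → ℝ)
    (d : (Fin 2 → ℝ) → ℝ) (hd : ContDiffOn ℝ 1 d Ω)
    (f : (Fin 2 → ℝ) → (Fin 3 → ℝ)) (hf : ∀ x, f x = P x + d x • m1 x)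
    (hpde : ∀ x ∈ Ω, ∀ i : Fin 2,
        dot3 (e x - lam1 x • ν1 x - (κ1 * κ2) • w) (fderiv ℝ f x (Pi.single i 1)) = 0)
    {y : Fin 2 → ℝ} (hy : y ∈ Ω) :
    DifferentiableAt ℝ (Gaux κ1 κ2 d ρ m1 P w) y ∧
      ∀ i : Fin 2, fderiv ℝ (Gaux κ1 κ2 d ρ m1 P w) y (Pi.single i 1)
        = -(e y 0 * (Pi.single i 1 : Fin 2 → ℝ) 0 + e y 1 * (Pi.single i 1 : Fin 2 → ℝ) 1) := by
  have hmem : Ω ∈ 𝓝 y := hΩ.mem_nhds hy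
  have hdd : DifferentiableAt ℝ d y := (hd.differentiableOn one_ne_zero).differentiableAt hmem
  have hρd : DifferentiableAt ℝ ρ y := hρdiff.differentiableAt hmem
  have heD : DifferentiableAt ℝ e y := (he.differentiableOn one_ne_zero).differentiableAt hmem
  have hφD : DifferentiableAt ℝ φ y := (hφ.differentiableOn one_ne_zero).differentiableAt hmem
  have huD : Differentiable ℝ u := hu.differentiable (by norm_num)
  have hfu : ContDiff ℝ 1 (fderiv ℝ u) := hu.fderiv_right (by norm_num)
  have hpD : ∀ j : Fin 2, DifferentiableAt ℝ (fun x => pd j u (φ x)) y := by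
    intro j
    have h1 : DifferentiableAt ℝ (fun x => fderiv ℝ u (φ x)) y :=
      ((hfu.differentiable one_ne_zero) (φ y)).comp y hφD
    exact h1.clm_apply (differentiableAt_const _)
  set c : (Fin 2 → ℝ) → ℝ := fun z => Real.sqrt (1 + pd 0 u (φ z) ^ 2 + pd 1 u (φ z) ^ 2)
    with hcdef
  have hcval : ∀ z : Fin 2 → ℝ, 1 + norm2 (grad2 u z) ^ 2 = 1 + pd 0 u z ^ 2 + pd 1 u z ^ 2 := by
    intro z
    have h : norm2 (grad2 u z) ^ 2 = pd 0 u z ^ 2 + pd 1 u z ^ 2 := by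
      rw [norm2, Real.sq_sqrt]
      · simp only [dot2, grad2, Matrix.cons_val_zero, Matrix.cons_val_one, Matrix.head_cons]
        ring
      · simp only [dot2, grad2, Matrix.cons_val_zero, Matrix.cons_val_one, Matrix.head_cons]
        nlinarith [sq_nonneg (pd 0 u z), sq_nonneg (pd 1 u z)]
    rw [h]; ring
  have hν1c : ∀ z, ν1 z = (c z)⁻¹ • ![-(pd 0 u (φ z)), -(pd 1 u (φ z)), 1] := by
    intro z
    rw [hν1 z, hcval (φ z)]
    simp only [grad2, Matrix.cons_val_zero, Matrix.cons_val_one, Matrix.head_cons, hcdef]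
  have hposrad : ∀ z : Fin 2 → ℝ, (0:ℝ) < 1 + pd 0 u (φ z) ^ 2 + pd 1 u (φ z) ^ 2 := by
    intro z; positivity
  have hcD : DifferentiableAt ℝ c y := by
    apply DifferentiableAt.sqrt
    · exact ((differentiableAt_const _).add ((hpD 0).pow 2)).add ((hpD 1).pow 2)
    · exact (hposrad y).ne'
  have hcpos : 0 < c y := Real.sqrt_pos.2 (hposrad y)
  have hν1D : DifferentiableAt ℝ ν1 y := by
    rw [show ν1 = fun z => (c z)⁻¹ • ![-(pd 0 u (φ z)), -(pd 1 u (φ z)), 1] from funext hν1c]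
    apply DifferentiableAt.smul (hcD.inv hcpos.ne')
    rw [differentiableAt_pi]
    intro j
    fin_cases j
    · simpa using (hpD 0).neg
    · simpa using (hpD 1).neg
    · simpa using differentiableAt_const (1:ℝ)
  have htD : DifferentiableAt ℝ (fun x => dot3 (e x) (ν1 x)) y := diff_dot3 heD hν1D
  have hκpos : (0:ℝ) < κ1 ^ 2 := by positivity
  have hradpos : 0 < 1 - (κ1 ^ 2)⁻¹ * (1 - dot3 (e y) (ν1 y) ^ 2) := by
    rw [inv_mul_eq_div, sub_pos, div_lt_one hκpos]
    nlinarith [sq_nonneg (dot3 (e y) (ν1 y))]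
  have hlamD : DifferentiableAt ℝ lam1 y := by
    rw [show lam1 = fun x => dot3 (e x) (ν1 x) -
        κ1 * Real.sqrt (1 - (κ1 ^ 2)⁻¹ * (1 - dot3 (e x) (ν1 x) ^ 2)) from funext hlam1]
    refine htD.sub (DifferentiableAt.const_mul ?_ κ1)
    exact DifferentiableAt.sqrt ((differentiableAt_const _).sub
      ((differentiableAt_const _).mul ((differentiableAt_const _).sub (htD.pow 2)))) hradpos.ne'
  have hAD : DifferentiableAt ℝ (fun x => e x - lam1 x • ν1 x) y := heD.sub (hlamD.smul hν1D)
  have hm1fun : m1 = fun x => κ1⁻¹ • (e x - lam1 x • ν1 x) := funext hm1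
  have hm1D : DifferentiableAt ℝ m1 y := by
    rw [hm1fun]; exact hAD.const_smul κ1⁻¹
  have hPD : DifferentiableAt ℝ P y := by
    rw [funext hP, differentiableAt_pi]
    intro j
    fin_cases j
    · simpa using diff_comp hφD 0
    · simpa using diff_comp hφD 1
    · simpa [Function.comp_def] using DifferentiableAt.comp y (huD (φ y)) hφD
  have hfD : DifferentiableAt ℝ f y := by
    rw [funext hf]; exact hPD.add (hdd.smul hm1D)
  have hMD : DifferentiableAt ℝ (fun x => dot3 w (m1 x)) y :=
    diff_dot3 (differentiableAt_const w) hm1D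
  have hWD : DifferentiableAt ℝ (fun x => dot3 w (P x)) y :=
    diff_dot3 (differentiableAt_const w) hPD
  have hGD : DifferentiableAt ℝ (Gaux κ1 κ2 d ρ m1 P w) y := by
    unfold Gaux
    exact ((((differentiableAt_const κ1).mul hdd).mul
      ((differentiableAt_const 1).sub ((differentiableAt_const κ2).mul hMD))).add hρd).sub
      ((differentiableAt_const _).mul hWD)
  refine ⟨hGD, ?_⟩
  -- basic invariants
  have heeΩ : ∀ x ∈ Ω, dot3 (e x) (e x) = 1 := by
    intro x hx
    have h := heunit x hx
    rw [norm3] at h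
    have h0 := dot3_self_nonneg (e x)
    have h1 := Real.sq_sqrt h0
    rw [h] at h1; norm_num at h1; linarith
  have hν1unit : ∀ z, dot3 (ν1 z) (ν1 z) = 1 := fun z => by rw [hν1 z]; exact nuUnit _
  have hAAΩ : ∀ x ∈ Ω, dot3 (e x - lam1 x • ν1 x) (e x - lam1 x • ν1 x) = κ1 ^ 2 :=
    fun x hx => normA hκ1 (hν1unit x) (heeΩ x hx) (hlam1 x)
  -- derivative of constant dot products
  have heDe : ∀ v, dot3 (e y) (fderiv ℝ e y v) = 0 := by
    intro v
    have hconst : (fun x => dot3 (e x) (e x)) =ᶠ[𝓝 y] fun _ => (1:ℝ) :=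
      Filter.eventuallyEq_of_mem hmem heeΩ
    have h1 : fderiv ℝ (fun x => dot3 (e x) (e x)) y v = 0 := by
      rw [hconst.fderiv_eq]; simp
    rw [fderiv_dot3 v heD heD] at h1
    have hsym : dot3 (fderiv ℝ e y v) (e y) = dot3 (e y) (fderiv ℝ e y v) := by
      simp only [dot3]; ring
    rw [hsym] at h1; linarith
  have hADA : ∀ v, dot3 (e y - lam1 y • ν1 y)
      (fderiv ℝ (fun x => e x - lam1 x • ν1 x) y v) = 0 := by
    intro v
    have hconst : (fun x => dot3 (e x - lam1 x • ν1 x) (e x - lam1 x • ν1 x))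
        =ᶠ[𝓝 y] fun _ => κ1 ^ 2 := Filter.eventuallyEq_of_mem hmem hAAΩ
    have h1 : fderiv ℝ (fun x => dot3 (e x - lam1 x • ν1 x) (e x - lam1 x • ν1 x)) y v = 0 := by
      rw [hconst.fderiv_eq]; simp
    rw [fderiv_dot3 v hAD hAD] at h1
    have hsym : dot3 (fderiv ℝ (fun x => e x - lam1 x • ν1 x) y v) (e y - lam1 y • ν1 y)
        = dot3 (e y - lam1 y • ν1 y) (fderiv ℝ (fun x => e x - lam1 x • ν1 x) y v) := by
      simp only [dot3]; ring
    rw [hsym] at h1; linarith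
  -- components of DP
  have hDP0 : ∀ v, fderiv ℝ P y v 0 = fderiv ℝ φ y v 0 := by
    intro v
    have hfun : (fun x => P x 0) = fun x => φ x 0 := funext fun x => by rw [hP x]; simp
    rw [← fderiv_comp_proj hPD 0, hfun, fderiv_comp_proj hφD 0]
  have hDP1 : ∀ v, fderiv ℝ P y v 1 = fderiv ℝ φ y v 1 := by
    intro v
    have hfun : (fun x => P x 1) = fun x => φ x 1 := funext fun x => by rw [hP x]; simp
    rw [← fderiv_comp_proj hPD 1, hfun, fderiv_comp_proj hφD 1]
  have hDP2 : ∀ v, fderiv ℝ P y v 2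
      = pd 0 u (φ y) * fderiv ℝ φ y v 0 + pd 1 u (φ y) * fderiv ℝ φ y v 1 := by
    intro v
    rw [← fderiv_comp_proj hPD 2]
    have h1 : (fun x => P x 2) = fun x => u (φ x) := funext fun x => by rw [hP x]; simp
    rw [h1]
    have h2 := ((huD (φ y)).hasFDerivAt.comp y hφD.hasFDerivAt).fderiv
    rw [show (fun x => u (φ x)) = u ∘ φ from rfl, h2]
    simp only [ContinuousLinearMap.comp_apply]
    rw [lin2 (fderiv ℝ u (φ y)) (fderiv ℝ φ y v)]
    simp only [pd]; ring
  have hνDP : ∀ v, dot3 (ν1 y) (fderiv ℝ P y v) = 0 := by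
    intro v
    rw [hν1c y]
    simp only [dot3, Pi.smul_apply, smul_eq_mul, Matrix.cons_val_zero, Matrix.cons_val_one,
      Matrix.head_cons, Matrix.cons_val_two, Matrix.tail_cons]
    rw [hDP0 v, hDP1 v, hDP2 v]
    ring
  have hDPc : ∀ (j : Fin 3) v, fderiv ℝ P y v j
      = fderiv ℝ (fun x => lift2 x j + ρ x * e x j) y v := by
    intro j v
    have heq : (fun x => P x j) =ᶠ[𝓝 y] (fun x => lift2 x j + ρ x * e x j) :=
      Filter.eventuallyEq_of_mem hmem fun x hx => by
        rw [hray x hx]; simp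
    rw [← fderiv_comp_proj hPD j, heq.fderiv_eq]
  have hDP0' : ∀ v, fderiv ℝ P y v 0
      = v 0 + fderiv ℝ ρ y v * e y 0 + ρ y * fderiv ℝ e y v 0 := by
    intro v
    rw [hDPc 0 v]
    have hfun : (fun x => lift2 x (0:Fin 3) + ρ x * e x 0)
        = fun x : Fin 2 → ℝ => x 0 + ρ x * e x 0 := funext fun x => by simp [lift2]
    rw [hfun]
    have H' : fderiv ℝ (fun x : Fin 2 → ℝ => x 0 + ρ x * e x 0) y = _ :=
      ((ContinuousLinearMap.proj (0 : Fin 2) :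
        (Fin 2 → ℝ) →L[ℝ] ℝ).hasFDerivAt.add
        (hρd.hasFDerivAt.mul (hasFDerivAt_comp_proj heD 0))).fderiv
    rw [H']
    simp only [ContinuousLinearMap.add_apply, ContinuousLinearMap.smul_apply,
      ContinuousLinearMap.comp_apply, ContinuousLinearMap.proj_apply, smul_eq_mul]
    ring
  have hDP1' : ∀ v, fderiv ℝ P y v 1
      = v 1 + fderiv ℝ ρ y v * e y 1 + ρ y * fderiv ℝ e y v 1 := by
    intro v
    rw [hDPc 1 v]
    have hfun : (fun x => lift2 x (1:Fin 3) + ρ x * e x 1)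
        = fun x : Fin 2 → ℝ => x 1 + ρ x * e x 1 := funext fun x => by simp [lift2]
    rw [hfun]
    have H' : fderiv ℝ (fun x : Fin 2 → ℝ => x 1 + ρ x * e x 1) y = _ :=
      ((ContinuousLinearMap.proj (1 : Fin 2) :
        (Fin 2 → ℝ) →L[ℝ] ℝ).hasFDerivAt.add
        (hρd.hasFDerivAt.mul (hasFDerivAt_comp_proj heD 1))).fderiv
    rw [H']
    simp only [ContinuousLinearMap.add_apply, ContinuousLinearMap.smul_apply,
      ContinuousLinearMap.comp_apply, ContinuousLinearMap.proj_apply, smul_eq_mul]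
    ring
  have hDP2' : ∀ v, fderiv ℝ P y v 2
      = fderiv ℝ ρ y v * e y 2 + ρ y * fderiv ℝ e y v 2 := by
    intro v
    rw [hDPc 2 v]
    have hfun : (fun x => lift2 x (2:Fin 3) + ρ x * e x 2)
        = fun x : Fin 2 → ℝ => ρ x * e x 2 := funext fun x => by simp [lift2]
    rw [hfun]
    have H' : fderiv ℝ (fun x : Fin 2 → ℝ => ρ x * e x 2) y = _ :=
      (hρd.hasFDerivAt.mul (hasFDerivAt_comp_proj heD 2)).fderiv
    rw [H']
    simp only [ContinuousLinearMap.add_apply, ContinuousLinearMap.smul_apply,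
      ContinuousLinearMap.comp_apply, ContinuousLinearMap.proj_apply, smul_eq_mul]
    ring
  have heDP : ∀ v, dot3 (e y) (fderiv ℝ P y v)
      = (e y 0 * v 0 + e y 1 * v 1) + fderiv ℝ ρ y v := by
    intro v
    have h1 := heeΩ y hy
    have h2 := heDe v
    simp only [dot3] at h1 h2 ⊢
    rw [hDP0' v, hDP1' v, hDP2' v]
    linear_combination (fderiv ℝ ρ y v) * h1 + ρ y * h2
  have hDm1v : ∀ v, fderiv ℝ m1 y v = κ1⁻¹ • fderiv ℝ (fun x => e x - lam1 x • ν1 x) y v := by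
    intro v
    rw [hm1fun, fderiv_fun_const_smul hAD]
    rfl
  have hκne : κ1 ≠ 0 := by linarith
  have hAm1 : dot3 (e y - lam1 y • ν1 y) (m1 y) = κ1 := by
    have hstep : dot3 (e y - lam1 y • ν1 y) (κ1⁻¹ • (e y - lam1 y • ν1 y))
        = κ1⁻¹ * dot3 (e y - lam1 y • ν1 y) (e y - lam1 y • ν1 y) := by
      simp only [dot3, Pi.smul_apply, smul_eq_mul]; ring
    rw [hm1 y, hstep, hAAΩ y hy]
    field_simp
  have hADm1 : ∀ v, dot3 (e y - lam1 y • ν1 y) (fderiv ℝ m1 y v) = 0 := by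
    intro v
    rw [hDm1v v]
    have h := hADA v
    simp only [dot3, Pi.smul_apply, smul_eq_mul] at h ⊢
    linear_combination κ1⁻¹ * h
  have hDfj : ∀ (j : Fin 3) v, fderiv ℝ f y v j
      = fderiv ℝ P y v j + fderiv ℝ d y v * m1 y j + d y * fderiv ℝ m1 y v j := by
    intro j v
    rw [← fderiv_comp_proj hfD j]
    have hfeq : (fun x => f x j) = fun x => P x j + d x * m1 x j :=
      funext fun x => by rw [hf x]; simp
    rw [hfeq]
    have H' : fderiv ℝ (fun x => P x j + d x * m1 x j) y = _ :=
      ((hasFDerivAt_comp_proj hPD j).add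
        (hdd.hasFDerivAt.mul (hasFDerivAt_comp_proj hm1D j))).fderiv
    rw [H']
    simp only [ContinuousLinearMap.add_apply, ContinuousLinearMap.smul_apply,
      ContinuousLinearMap.comp_apply, ContinuousLinearMap.proj_apply, smul_eq_mul]
    ring
  have hDMv : ∀ v, fderiv ℝ (fun x => dot3 w (m1 x)) y v = dot3 w (fderiv ℝ m1 y v) := by
    intro v
    rw [fderiv_dot3 v (differentiableAt_const w) hm1D]
    simp [dot3]
  have hDWv : ∀ v, fderiv ℝ (fun x => dot3 w (P x)) y v = dot3 w (fderiv ℝ P y v) := by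
    intro v
    rw [fderiv_dot3 v (differentiableAt_const w) hPD]
    simp [dot3]
  intro i
  set v : Fin 2 → ℝ := Pi.single i 1 with hv
  have hp := hpde y hy i
  rw [← hv] at hp
  have hADP : dot3 (e y - lam1 y • ν1 y) (fderiv ℝ P y v)
      = e y 0 * v 0 + e y 1 * v 1 + fderiv ℝ ρ y v := by
    have h1 := heDP v
    have h2 := hνDP v
    simp only [dot3, Pi.sub_apply, Pi.smul_apply, smul_eq_mul] at h1 h2 ⊢
    linear_combination h1 - lam1 y * h2
  have hE : (e y 0 * v 0 + e y 1 * v 1) + fderiv ℝ ρ y v + κ1 * fderiv ℝ d y v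
      - (κ1 * κ2) * dot3 w (fderiv ℝ P y v)
      - (κ1 * κ2) * fderiv ℝ d y v * dot3 w (m1 y)
      - (κ1 * κ2) * d y * dot3 w (fderiv ℝ m1 y v) = 0 := by
    have hAm1' := hAm1
    have hADm1' := hADm1 v
    simp only [dot3, Pi.sub_apply, Pi.smul_apply, smul_eq_mul] at hp
    rw [hDfj 0 v, hDfj 1 v, hDfj 2 v] at hp
    simp only [dot3, Pi.sub_apply, Pi.smul_apply, smul_eq_mul] at hADP hAm1' hADm1' ⊢
    linear_combination hp - hADP - (fderiv ℝ d y v) * hAm1' - d y * hADm1'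
  have hGder : HasFDerivAt (Gaux κ1 κ2 d ρ m1 P w) _ y :=
    (((hdd.hasFDerivAt.const_mul κ1).mul
      ((hMD.hasFDerivAt.const_mul κ2).const_sub 1)).add
      hρd.hasFDerivAt).sub (hWD.hasFDerivAt.const_mul (κ1 * κ2))
  rw [hGder.fderiv]
  simp only [ContinuousLinearMap.add_apply, ContinuousLinearMap.coe_sub', Pi.sub_apply,
    ContinuousLinearMap.smul_apply, ContinuousLinearMap.neg_apply, smul_eq_mul]
  rw [hDMv v, hDWv v]
  linear_combination hE

/-- necessity in Theorem 3.1. If the top surface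
`f(x) = P(x) + d(x) m₁(x)` with `d ∈ C¹` satisfies the orthogonality system, then the
horizontal part of the incident field `e` is curl free, and `d` is given by the explicit
formula (3.14) for some constant `C`. -/
theorem farfield_necessity
    (Ω : Set (Fin 2 → ℝ)) (hΩ : IsOpen Ω) (hsc : SimplyConnectedSpace Ω)
    (κ1 κ2 : ℝ) (hκ1 : 1 < κ1) (hκ2 : 0 < κ2) (hκ2' : κ2 < 1)
    (u : (Fin 2 → ℝ) → ℝ) (hu : ContDiff ℝ 2 u)
    (φ : (Fin 2 → ℝ) → (Fin 2 → ℝ)) (hφ : ContDiffOn ℝ 1 φ Ω)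
    (P : (Fin 2 → ℝ) → (Fin 3 → ℝ)) (hP : ∀ x, P x = ![φ x 0, φ x 1, u (φ x)])
    (e : (Fin 2 → ℝ) → (Fin 3 → ℝ)) (he : ContDiffOn ℝ 1 e Ω)
    (heunit : ∀ x ∈ Ω, norm3 (e x) = 1) (he3 : ∀ x ∈ Ω, 0 < e x 2)
    (ρ : (Fin 2 → ℝ) → ℝ) (hρpos : ∀ x ∈ Ω, 0 < ρ x) (hρdiff : DifferentiableOn ℝ ρ Ω)
    (hray : ∀ x ∈ Ω, P x = lift2 x + ρ x • e x)
    (ν1 : (Fin 2 → ℝ) → (Fin 3 → ℝ))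
    (hν1 : ∀ x, ν1 x = (Real.sqrt (1 + norm2 (grad2 u (φ x)) ^ 2))⁻¹ •
        ![-(grad2 u (φ x) 0), -(grad2 u (φ x) 1), 1])
    (hortho : ∀ x ∈ Ω, 0 ≤ dot3 (e x) (ν1 x))
    (lam1 : (Fin 2 → ℝ) → ℝ)
    (hlam1 : ∀ x, lam1 x = dot3 (e x) (ν1 x) -
        κ1 * Real.sqrt (1 - (κ1 ^ 2)⁻¹ * (1 - dot3 (e x) (ν1 x) ^ 2)))
    (m1 : (Fin 2 → ℝ) → (Fin 3 → ℝ)) (hm1 : ∀ x, m1 x = κ1⁻¹ • (e x - lam1 x • ν1 x))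
    (w : Fin 3 → ℝ) (hw : norm3 w = 1)
    (d : (Fin 2 → ℝ) → ℝ) (hd : ContDiffOn ℝ 1 d Ω)
    (f : (Fin 2 → ℝ) → (Fin 3 → ℝ)) (hf : ∀ x, f x = P x + d x • m1 x)
    (hpde : ∀ x ∈ Ω, ∀ i : Fin 2,
        dot3 (e x - lam1 x • ν1 x - (κ1 * κ2) • w) (fderiv ℝ f x (Pi.single i 1)) = 0) :
    (∀ x ∈ Ω, pd 0 (fun y => e y 1) x = pd 1 (fun y => e y 0) x) ∧
      ∀ h : (Fin 2 → ℝ) → ℝ, (∀ x ∈ Ω, DifferentiableAt ℝ h x) →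
        (∀ x ∈ Ω, pd 0 h x = e x 0 ∧ pd 1 h x = e x 1) →
        ∃ C : ℝ, ∀ x ∈ Ω,
          d x = (C - h x + dot3 (e x) (lift2 x) - dot3 (e x - (κ1 * κ2) • w) (P x)) /
              (κ1 - κ2 * dot3 w (e x - lam1 x • ν1 x)) := by
  have key : ∀ {y : Fin 2 → ℝ}, y ∈ Ω →
      DifferentiableAt ℝ (Gaux κ1 κ2 d ρ m1 P w) y ∧
      ∀ i : Fin 2, fderiv ℝ (Gaux κ1 κ2 d ρ m1 P w) y (Pi.single i 1)
        = -(e y 0 * (Pi.single i 1 : Fin 2 → ℝ) 0 + e y 1 * (Pi.single i 1 : Fin 2 → ℝ) 1) :=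
    fun {y} hy => keyDeriv Ω hΩ κ1 κ2 hκ1 u hu φ hφ P hP e he heunit ρ hρdiff hray
      ν1 hν1 lam1 hlam1 m1 hm1 w d hd f hf hpde hy
  constructor
  · -- curl-free part
    intro x hx
    have hmem : Ω ∈ 𝓝 x := hΩ.mem_nhds hx
    have heDx : DifferentiableAt ℝ e x := (he.differentiableOn one_ne_zero).differentiableAt hmem
    set L : (Fin 2 → ℝ) → (Fin 2 → ℝ) →L[ℝ] ℝ := fun z =>
      (e z 0) • (ContinuousLinearMap.proj 0 : (Fin 2 → ℝ) →L[ℝ] ℝ)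
        + (e z 1) • (ContinuousLinearMap.proj 1 : (Fin 2 → ℝ) →L[ℝ] ℝ) with hL
    have hLval : ∀ z (v : Fin 2 → ℝ), L z v = e z 0 * v 0 + e z 1 * v 1 := by
      intro z v
      simp [hL]
    have hFz : ∀ z ∈ Ω, HasFDerivAt (fun x' => -(Gaux κ1 κ2 d ρ m1 P w x')) (L z) z := by
      intro z hz
      have hk := key hz
      have hdiff : DifferentiableAt ℝ (fun x' => -(Gaux κ1 κ2 d ρ m1 P w x')) z := hk.1.neg
      have heq : fderiv ℝ (fun x' => -(Gaux κ1 κ2 d ρ m1 P w x')) z = L z := by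
        apply clm_ext2
        · rw [fderiv_fun_neg, ContinuousLinearMap.neg_apply, hk.2 0, hLval]
          simp
        · rw [fderiv_fun_neg, ContinuousLinearMap.neg_apply, hk.2 1, hLval]
          simp
      exact heq ▸ hdiff.hasFDerivAt
    have hLdiff : DifferentiableAt ℝ L x :=
      ((diff_comp heDx 0).smul_const _).add ((diff_comp heDx 1).smul_const _)
    have hsymm := second_derivative_symmetric_of_eventually_of_real
      (Filter.eventually_of_mem hmem hFz) hLdiff.hasFDerivAt
      (Pi.single 0 1) (Pi.single 1 1)
    have htrans : ∀ (a b : Fin 2),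
        fderiv ℝ (fun z => e z (Fin.castSucc b)) x (Pi.single a 1)
          = fderiv ℝ L x (Pi.single a 1) (Pi.single b 1) := by
      intro a b
      have hfun : (fun z => e z (Fin.castSucc b)) = fun z => L z (Pi.single b 1) := by
        funext z
        rw [hLval]
        fin_cases b <;> simp
      rw [hfun, fderiv_clm_apply hLdiff (differentiableAt_const _)]
      simp
    have h1 := htrans 0 1
    have h2 := htrans 1 0
    simp only [pd]
    rw [show (1 : Fin 3) = Fin.castSucc 1 from rfl, show (0 : Fin 3) = Fin.castSucc 0 from rfl,
      h1, h2, hsymm]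
  · -- potential part
    intro h hhdiff hgrad
    haveI := hsc
    haveI : PreconnectedSpace ↥Ω := inferInstance
    have hne : Nonempty ↥Ω := PathConnectedSpace.nonempty
    obtain ⟨x₀, hx₀⟩ := hne.some
    set K : (Fin 2 → ℝ) → ℝ := fun x' => h x' + Gaux κ1 κ2 d ρ m1 P w x' with hKdef
    have hKdiff : ∀ z ∈ Ω, DifferentiableAt ℝ K z := fun z hz => (hhdiff z hz).add (key hz).1
    have hK0 : ∀ z ∈ Ω, fderiv ℝ K z = 0 := by
      intro z hz
      have hk := key hz
      have hgz := hgrad z hz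
      have e0 : fderiv ℝ K z (Pi.single 0 1) = 0 := by
        rw [hKdef, fderiv_fun_add (hhdiff z hz) hk.1, ContinuousLinearMap.add_apply, hk.2 0]
        have hh0 := hgz.1
        rw [pd] at hh0
        rw [hh0]
        simp
      have e1 : fderiv ℝ K z (Pi.single 1 1) = 0 := by
        rw [hKdef, fderiv_fun_add (hhdiff z hz) hk.1, ContinuousLinearMap.add_apply, hk.2 1]
        have hh1 := hgz.2
        rw [pd] at hh1
        rw [hh1]
        simp
      exact clm_ext2 (by rw [e0]; simp) (by rw [e1]; simp)
    have hlc : IsLocallyConstant (fun z : ↥Ω => K z.1) := by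
      rw [IsLocallyConstant.iff_exists_open]
      intro z
      obtain ⟨ε, hε, hball⟩ := Metric.isOpen_iff.1 hΩ z.1 z.2
      refine ⟨Subtype.val ⁻¹' Metric.ball z.1 ε,
        Metric.isOpen_ball.preimage continuous_subtype_val, Metric.mem_ball_self hε, ?_⟩
      intro z' hz'
      exact (convex_ball z.1 ε).is_const_of_fderivWithin_eq_zero
        (fun p hp => (hKdiff p (hball hp)).differentiableWithinAt)
        (fun p hp => by
          rw [fderivWithin_of_isOpen Metric.isOpen_ball hp]
          exact hK0 p (hball hp))
        hz' (Metric.mem_ball_self hε)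
    refine ⟨K x₀, ?_⟩
    intro x hx
    have hCx : K x = K x₀ := hlc.apply_eq_of_preconnectedSpace ⟨x, hx⟩ ⟨x₀, hx₀⟩
    -- algebra
    have hee : dot3 (e x) (e x) = 1 := by
      have hh := heunit x hx
      rw [norm3] at hh
      have h0 := dot3_self_nonneg (e x)
      have h1 := Real.sq_sqrt h0
      rw [hh] at h1
      norm_num at h1
      linarith
    have hww : dot3 w w = 1 := by
      have hh := hw
      rw [norm3] at hh
      have h0 := dot3_self_nonneg w
      have h1 := Real.sq_sqrt h0
      rw [hh] at h1
      norm_num at h1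
      linarith
    have hν1u : dot3 (ν1 x) (ν1 x) = 1 := by rw [hν1 x]; exact nuUnit _
    have hAA : dot3 (e x - lam1 x • ν1 x) (e x - lam1 x • ν1 x) = κ1 ^ 2 :=
      normA hκ1 hν1u hee (hlam1 x)
    set S := dot3 w (e x - lam1 x • ν1 x) with hS
    have hCS : S ^ 2 ≤ κ1 ^ 2 := by
      have hcs := cs3 w (e x - lam1 x • ν1 x)
      rw [hww, hAA] at hcs
      simpa [hS] using hcs
    have hSle : S ≤ κ1 := by nlinarith [hCS]
    have hden : 0 < κ1 - κ2 * S := by nlinarith [hSle, hκ2, hκ2', hκ1]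
    have hκne : κ1 ≠ 0 := by linarith
    have hρval : ρ x = dot3 (e x) (P x) - dot3 (e x) (lift2 x) := by
      rw [hray x hx]
      simp only [dot3, Pi.add_apply, Pi.smul_apply, smul_eq_mul, lift2, Matrix.cons_val_zero,
        Matrix.cons_val_one, Matrix.head_cons, Matrix.cons_val_two, Matrix.tail_cons]
      simp only [dot3] at hee
      linear_combination (-(ρ x)) * hee
    have hwm : dot3 w (m1 x) = κ1⁻¹ * S := by
      rw [hm1 x, hS]
      simp only [dot3, Pi.smul_apply, Pi.sub_apply, smul_eq_mul]
      ring
    have h1κ : κ1 * d x * (1 - κ2 * dot3 w (m1 x)) = d x * (κ1 - κ2 * S) := by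
      rw [hwm]
      field_simp
    have hKx : h x + (κ1 * d x * (1 - κ2 * dot3 w (m1 x)) + ρ x
        - (κ1 * κ2) * dot3 w (P x)) = K x₀ := by
      rw [← hCx]
      rfl
    rw [h1κ, hρval] at hKx
    have hexp : dot3 (e x - (κ1 * κ2) • w) (P x)
        = dot3 (e x) (P x) - (κ1 * κ2) * dot3 w (P x) := by
      simp only [dot3, Pi.sub_apply, Pi.smul_apply, smul_eq_mul]
      ring
    rw [eq_div_iff hden.ne', hexp]
    linarith [hKx]
end
end

section
/- Let $\kappa_1>1$ and for $p\in\mathbb{R}^2$ define $\Delta(p) = \dfrac{1}{1+|p|^2}\left(1 - \kappa_1\sqrt{1+\left(1-\kappa_1^{-2}\right)|p|^2}\right)$ and the refracted direction $m_1(p) = \dfrac{1}{\kappa_1}\big(\Delta(p)\,p,\; 1-\Delta(p)\big)\in\mathbb{R}^3$. Then there exists a constant $M$ depending only on $\kappa_1$ such that $|m_1(p)-m_1(q)| \le M\,|p-q|$ for all $p,q\in\mathbb{R}^2$. -/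
/-! Rationalizing the numerator gives `Δ(p) = (1 - κ₁²) / (1 + S(p))` with
`S(p) = √(κ₁² + (κ₁² - 1)|p|²)`. As the Euclidean norm of `(κ₁, √(κ₁² - 1) p)`, `S` is
`√(κ₁² - 1)`-Lipschitz, hence so is `1 / (1 + S)`. For `p / (1 + S(p))` write
`p/(1+S(p)) - q/(1+S(q)) = (p - q)/(1+S(p)) + (1/(1+S(p)) - 1/(1+S(q))) q`: the growth of `q` in
the second term is absorbed by `S(q) ≥ √(κ₁² - 1)|q|`. -/

open Real

lemma norm_euclideanSpace_two (u v : ℝ) :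
    ‖(!₂[u, v] : EuclideanSpace ℝ (Fin 2))‖ = √(u ^ 2 + v ^ 2) := by
  simp [EuclideanSpace.norm_eq, Fin.sum_univ_two]

lemma abs_sqrt_add_mul_sq_sub_le {a c : ℝ} (ha : 0 ≤ a) (hc : 0 ≤ c) (x y : ℝ) :
    |√(a + c * x ^ 2) - √(a + c * y ^ 2)| ≤ √c * |x - y| := by
  have hnorm : ∀ z, √(a + c * z ^ 2) = ‖(!₂[√a, √c * z] : EuclideanSpace ℝ (Fin 2))‖ := by
    intro z
    rw [norm_euclideanSpace_two, mul_pow, sq_sqrt ha, sq_sqrt hc]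
  calc |√(a + c * x ^ 2) - √(a + c * y ^ 2)|
      ≤ ‖(!₂[√a, √c * x] - !₂[√a, √c * y] : EuclideanSpace ℝ (Fin 2))‖ := by
        rw [hnorm, hnorm]; exact abs_norm_sub_norm_le _ _
    _ = √c * |x - y| := by
        rw [← WithLp.toLp_sub]
        simp [norm_euclideanSpace_two, ← mul_sub, mul_pow, sq_sqrt hc, sqrt_mul hc, sqrt_sq_eq_abs]

section RefractionFactor

variable {E : Type*} [SeminormedAddCommGroup E]

noncomputable def refractionFactor (a c : ℝ) (p : E) : ℝ := (1 + √(a + c * ‖p‖ ^ 2))⁻¹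

variable {a c : ℝ}

lemma refractionFactor_pos (p : E) : 0 < refractionFactor a c p := by
  unfold refractionFactor; positivity

lemma refractionFactor_le_one (p : E) : refractionFactor a c p ≤ 1 :=
  inv_le_one_of_one_le₀ (le_add_of_nonneg_right (sqrt_nonneg _))

lemma sqrt_mul_norm_mul_refractionFactor_le_one (ha : 0 ≤ a) (hc : 0 ≤ c) (p : E) :
    √c * ‖p‖ * refractionFactor a c p ≤ 1 := by
  have hS : √c * ‖p‖ ≤ √(a + c * ‖p‖ ^ 2) :=
    calc √c * ‖p‖ = √(c * ‖p‖ ^ 2) := by rw [sqrt_mul hc, sqrt_sq (norm_nonneg p)]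
      _ ≤ √(a + c * ‖p‖ ^ 2) := sqrt_le_sqrt (by linarith)
  unfold refractionFactor
  rw [← div_eq_mul_inv, div_le_one (by positivity)]
  linarith

lemma abs_refractionFactor_sub_le (ha : 0 ≤ a) (hc : 0 ≤ c) (p q : E) :
    |refractionFactor a c p - refractionFactor a c q|
      ≤ √c * ‖p - q‖ * refractionFactor a c p * refractionFactor a c q := by
  have hAB : |√(a + c * ‖p‖ ^ 2) - √(a + c * ‖q‖ ^ 2)| ≤ √c * ‖p - q‖ :=
    (abs_sqrt_add_mul_sq_sub_le ha hc _ _).trans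
      (mul_le_mul_of_nonneg_left (abs_norm_sub_norm_le p q) (sqrt_nonneg c))
  have hdiff : refractionFactor a c p - refractionFactor a c q
      = (√(a + c * ‖q‖ ^ 2) - √(a + c * ‖p‖ ^ 2)) *
          refractionFactor a c p * refractionFactor a c q := by
    unfold refractionFactor
    rw [inv_sub_inv (by positivity) (by positivity), div_eq_mul_inv, mul_inv]
    ring
  rw [hdiff, abs_mul, abs_mul, abs_sub_comm, abs_of_pos (refractionFactor_pos p),
    abs_of_pos (refractionFactor_pos q), mul_assoc, mul_assoc _ (refractionFactor a c p)]
  exact mul_le_mul_of_nonneg_right hAB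
    (mul_pos (refractionFactor_pos p) (refractionFactor_pos q)).le

lemma abs_refractionFactor_sub_le_sqrt_mul (ha : 0 ≤ a) (hc : 0 ≤ c) (p q : E) :
    |refractionFactor a c p - refractionFactor a c q| ≤ √c * ‖p - q‖ := by
  have hd : 0 ≤ √c * ‖p - q‖ := by positivity
  calc |refractionFactor a c p - refractionFactor a c q|
      ≤ √c * ‖p - q‖ * refractionFactor a c p * refractionFactor a c q :=
        abs_refractionFactor_sub_le ha hc p q
    _ ≤ √c * ‖p - q‖ * refractionFactor a c p :=
        mul_le_of_le_one_right (mul_nonneg hd (refractionFactor_pos p).le)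
          (refractionFactor_le_one q)
    _ ≤ √c * ‖p - q‖ := mul_le_of_le_one_right hd (refractionFactor_le_one p)

lemma norm_refractionFactor_smul_sub_le [NormedSpace ℝ E] (ha : 0 ≤ a) (hc : 0 ≤ c) (p q : E) :
    ‖refractionFactor a c p • p - refractionFactor a c q • q‖ ≤ 2 * ‖p - q‖ := by
  have hp := refractionFactor_pos (a := a) (c := c) p
  have hsplit : refractionFactor a c p • p - refractionFactor a c q • q
      = refractionFactor a c p • (p - q) +
          (refractionFactor a c p - refractionFactor a c q) • q := by
    rw [smul_sub, sub_smul]; abel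
  have hfirst : refractionFactor a c p * ‖p - q‖ ≤ ‖p - q‖ :=
    mul_le_of_le_one_left (norm_nonneg _) (refractionFactor_le_one p)
  have hsecond : |refractionFactor a c p - refractionFactor a c q| * ‖q‖ ≤ ‖p - q‖ :=
    calc |refractionFactor a c p - refractionFactor a c q| * ‖q‖
        ≤ √c * ‖p - q‖ * refractionFactor a c p * refractionFactor a c q * ‖q‖ := by
          gcongr; exact abs_refractionFactor_sub_le ha hc p q
      _ = ‖p - q‖ * refractionFactor a c p * (√c * ‖q‖ * refractionFactor a c q) := by ring
      _ ≤ ‖p - q‖ * refractionFactor a c p :=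
          mul_le_of_le_one_right (mul_nonneg (norm_nonneg _) hp.le)
            (sqrt_mul_norm_mul_refractionFactor_le_one ha hc q)
      _ ≤ ‖p - q‖ := mul_le_of_le_one_right (norm_nonneg _) (refractionFactor_le_one p)
  calc ‖refractionFactor a c p • p - refractionFactor a c q • q‖
      ≤ refractionFactor a c p * ‖p - q‖ +
          |refractionFactor a c p - refractionFactor a c q| * ‖q‖ := by
        rw [hsplit]
        refine (norm_add_le _ _).trans_eq ?_
        rw [norm_smul, norm_smul, Real.norm_of_nonneg hp.le, Real.norm_eq_abs]
    _ ≤ 2 * ‖p - q‖ := by linarith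

end RefractionFactor

lemma inv_one_add_sq_mul_one_sub_mul_sqrt {κ : ℝ} (hκ : 1 ≤ κ) (r : ℝ) :
    (1 + r ^ 2)⁻¹ * (1 - κ * √(1 + (1 - (κ ^ 2)⁻¹) * r ^ 2))
      = (1 - κ ^ 2) * (1 + √(κ ^ 2 + (κ ^ 2 - 1) * r ^ 2))⁻¹ := by
  have hκ0 : 0 < κ := by linarith
  have hc : 0 ≤ κ ^ 2 - 1 := by nlinarith
  have hS : κ * √(1 + (1 - (κ ^ 2)⁻¹) * r ^ 2) = √(κ ^ 2 + (κ ^ 2 - 1) * r ^ 2) :=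
    calc κ * √(1 + (1 - (κ ^ 2)⁻¹) * r ^ 2)
        = √(κ ^ 2) * √(1 + (1 - (κ ^ 2)⁻¹) * r ^ 2) := by rw [sqrt_sq hκ0.le]
      _ = √(κ ^ 2 + (κ ^ 2 - 1) * r ^ 2) := by
        rw [← sqrt_mul (sq_nonneg κ)]
        congr 1
        field_simp
  have hS2 : √(κ ^ 2 + (κ ^ 2 - 1) * r ^ 2) ^ 2 = κ ^ 2 + (κ ^ 2 - 1) * r ^ 2 :=
    sq_sqrt (by positivity)
  rw [hS, ← div_eq_inv_mul, ← div_eq_mul_inv, div_eq_div_iff (by positivity) (by positivity)]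
  linear_combination -hS2

lemma norm2_eq_norm (x : Fin 2 → ℝ) : norm2 x = ‖(WithLp.toLp 2 x : EuclideanSpace ℝ (Fin 2))‖ := by
  simp [norm2, dot2, EuclideanSpace.norm_eq, Fin.sum_univ_two, sq]

lemma norm3_le_norm2_add_abs (v : Fin 3 → ℝ) : norm3 v ≤ norm2 ![v 0, v 1] + |v 2| := by
  have hX : 0 ≤ dot2 ![v 0, v 1] ![v 0, v 1] := add_nonneg (mul_self_nonneg _) (mul_self_nonneg _)
  have h3 : dot3 v v = norm2 ![v 0, v 1] ^ 2 + |v 2| ^ 2 := by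
    rw [norm2, sq_sqrt hX, sq_abs]
    simp [dot3, dot2, sq]
  have hn : 0 ≤ norm2 ![v 0, v 1] := sqrt_nonneg _
  rw [norm3, h3, sqrt_le_left (by positivity)]
  nlinarith [mul_nonneg hn (abs_nonneg (v 2))]

lemma norm3_smul_sub_le (k s t : ℝ) (p q : Fin 2 → ℝ) :
    norm3 (k • ![s * p 0, s * p 1, 1 - s] - k • ![t * q 0, t * q 1, 1 - t])
      ≤ |k| * (‖s • WithLp.toLp 2 p - t • WithLp.toLp 2 q‖ + |s - t|) := by
  set v := k • ![s * p 0, s * p 1, 1 - s] - k • ![t * q 0, t * q 1, 1 - t]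
  have hplanar : (WithLp.toLp 2 ![v 0, v 1] : EuclideanSpace ℝ (Fin 2))
      = k • (s • WithLp.toLp 2 p - t • WithLp.toLp 2 q) := by
    ext i; fin_cases i <;>
      simp only [v, Fin.isValue, Matrix.smul_cons, smul_eq_mul, Matrix.smul_empty, Matrix.sub_cons,
        Matrix.head_cons, Matrix.tail_cons, Matrix.cons_val_zero, Matrix.cons_val_one, Fin.zero_eta,
        Fin.mk_one, Matrix.cons_val_fin_one, PiLp.smul_apply, PiLp.sub_apply] <;> ring
  have hvertical : v 2 = k * (t - s) := by
    simp only [v, Fin.isValue, Matrix.smul_cons, smul_eq_mul, Matrix.smul_empty, Matrix.sub_cons,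
      Matrix.head_cons, Matrix.tail_cons, Matrix.cons_val]
    ring
  refine (norm3_le_norm2_add_abs v).trans_eq ?_
  rw [norm2_eq_norm, hplanar, hvertical, norm_smul, Real.norm_eq_abs, abs_mul, abs_sub_comm t s]
  ring

/-- Lipschitz estimate for the refracted direction of a vertical ray:
there is `M = M(κ₁)` with `|m₁(p) - m₁(q)| ≤ M |p - q|`. -/
theorem refracted_direction_lipschitz (κ1 : ℝ) (hκ1 : 1 < κ1)
    (Δ : (Fin 2 → ℝ) → ℝ)
    (hΔ : ∀ p, Δ p = (1 + norm2 p ^ 2)⁻¹ *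
        (1 - κ1 * Real.sqrt (1 + (1 - (κ1 ^ 2)⁻¹) * norm2 p ^ 2)))
    (m1 : (Fin 2 → ℝ) → (Fin 3 → ℝ))
    (hm1 : ∀ p, m1 p = κ1⁻¹ • ![Δ p * p 0, Δ p * p 1, 1 - Δ p]) :
    ∃ M : ℝ, ∀ p q : Fin 2 → ℝ, norm3 (m1 p - m1 q) ≤ M * norm2 (p - q) := by
  have hc : 0 ≤ κ1 ^ 2 - 1 := by nlinarith
  set g := refractionFactor (E := EuclideanSpace ℝ (Fin 2)) (κ1 ^ 2) (κ1 ^ 2 - 1)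
  have hΔg : ∀ p, Δ p = (1 - κ1 ^ 2) * g (WithLp.toLp 2 p) := fun p => by
    rw [hΔ, norm2_eq_norm, inv_one_add_sq_mul_one_sub_mul_sqrt hκ1.le]; rfl
  refine ⟨κ1⁻¹ * (κ1 ^ 2 - 1) * (2 + √(κ1 ^ 2 - 1)), fun p q => ?_⟩
  set P : EuclideanSpace ℝ (Fin 2) := WithLp.toLp 2 p
  set Q : EuclideanSpace ℝ (Fin 2) := WithLp.toLp 2 q
  calc norm3 (m1 p - m1 q) ≤ |κ1⁻¹| * (‖Δ p • P - Δ q • Q‖ + |Δ p - Δ q|) := by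
        rw [hm1, hm1]; exact norm3_smul_sub_le _ _ _ p q
    _ = κ1⁻¹ * (κ1 ^ 2 - 1) * (‖g P • P - g Q • Q‖ + |g P - g Q|) := by
        rw [hΔg, hΔg, mul_smul, mul_smul, ← smul_sub, ← mul_sub, norm_smul, Real.norm_eq_abs,
          abs_mul, abs_inv, abs_of_pos (by linarith), abs_sub_comm, abs_of_nonneg hc]
        ring
    _ ≤ κ1⁻¹ * (κ1 ^ 2 - 1) * (2 * ‖P - Q‖ + √(κ1 ^ 2 - 1) * ‖P - Q‖) := by
        gcongr
        · exact norm_refractionFactor_smul_sub_le (sq_nonneg κ1) hc P Q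
        · exact abs_refractionFactor_sub_le_sqrt_mul (sq_nonneg κ1) hc P Q
    _ = κ1⁻¹ * (κ1 ^ 2 - 1) * (2 + √(κ1 ^ 2 - 1)) * norm2 (p - q) := by
        rw [norm2_eq_norm, WithLp.toLp_sub]; ring
end
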